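/- arXiv:1802.00608 — 5 statements merged into one kernel-verified Lean document; each statement's English description precedes it below -/
import Mathlib

section
/- Let n ≥ 4 be an integer, f(u) = (1 − u²)·u^{n−3}, v = √((n−3)/(n−1)) and a_max = (2/(n−1))·v^{n−3}. For a ≤ a_max let u_a be the unique element of [v, ∞) with f(u_a) = a, and set c_a = ((n−1)·u_a − (n−3)/u_a)/2. Then the map a ↦ c_a is a strictly decreasing bijection from (−∞, a_max] onto [0, ∞), and c_0 = 1. -/
/-- `f u = (1 - u²) u^(n-3)` for `u > 0`. -/
noncomputable def gtF (n : ℕ) (u : ℝ) : ℝ := (1 - u ^ 2) * u ^ (n - 3)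

/-- `v = √((n-3)/(n-1))`. -/
noncomputable def gtV (n : ℕ) : ℝ := Real.sqrt (((n : ℝ) - 3) / ((n : ℝ) - 1))

/-- `a_max = (2/(n-1)) v^(n-3)`. -/
noncomputable def gtAmax (n : ℕ) : ℝ := 2 / ((n : ℝ) - 1) * gtV n ^ (n - 3)

/-!
The profile `f` is strictly decreasing on `[v, ∞)` (its derivative is
`u^(n-4) ((n-3) - (n-1) u²)`), with `f v = a_max`, so `a ↦ u_a` is the inverse of the
bijection `f : [v, ∞) → (-∞, a_max]` and is strictly decreasing. The coefficient
`c(u) = ((n-1) u - (n-3)/u)/2` is strictly increasing in `u > 0`, vanishes at `u = v`,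
and solving the quadratic `(n-1) u² - 2 t u - (n-3) = 0` shows that it maps `[v, ∞)`
onto `[0, ∞)`. Composing, `a ↦ c(u_a)` is a strictly decreasing bijection, and
`f 1 = 0` gives `u_0 = 1`, hence `c_0 = 1`.
-/

open Set

theorem Set.LeftInvOn.strictAntiOn {α β : Type*} [LinearOrder α] [LinearOrder β]
    {f : α → β} {g : β → α} {s : Set α} {t : Set β} (hfg : LeftInvOn f g t)
    (hf : StrictAntiOn f s) (hg : MapsTo g t s) : StrictAntiOn g t := by
  intro a ha b hb hab
  rw [← hf.lt_iff_gt (hg ha) (hg hb), hfg ha, hfg hb]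
  exact hab

/-- The paper's `c_a` is `coneCoeff (n-1) (n-3) u_a`. -/
noncomputable def coneCoeff (α β u : ℝ) : ℝ := (α * u - β / u) / 2

section coneCoeff

variable {α β : ℝ}

theorem coneCoeff_strictMonoOn (hα : 0 < α) (hβ : 0 ≤ β) :
    StrictMonoOn (coneCoeff α β) (Ioi 0) := by
  intro x hx y _ hxy
  have hαxy : α * x < α * y := mul_lt_mul_of_pos_left hxy hα
  have hβxy : β / y ≤ β / x := div_le_div_of_nonneg_left hβ hx hxy.le
  unfold coneCoeff
  linarith

theorem coneCoeff_sqrt_div (hα : 0 < α) (hβ : 0 < β) : coneCoeff α β √(β / α) = 0 := by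
  have hsq : √(β / α) ^ 2 = β / α := Real.sq_sqrt (by positivity)
  have hpos : 0 < √(β / α) := by positivity
  unfold coneCoeff
  field_simp
  rw [hsq]
  field_simp
  ring

theorem coneCoeff_bijOn (hα : 0 < α) (hβ : 0 < β) :
    BijOn (coneCoeff α β) (Ici √(β / α)) (Ici 0) := by
  have hpos : 0 < √(β / α) := by positivity
  have hmono := (coneCoeff_strictMonoOn hα hβ.le).mono (Ici_subset_Ioi.2 hpos)
  have hzero := coneCoeff_sqrt_div hα hβ
  refine ⟨fun u hu => ?_, hmono.injOn, fun t ht => ?_⟩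
  · rw [mem_Ici, ← hzero]
    exact hmono.monotoneOn self_mem_Ici hu hu
  · rw [mem_Ici] at ht
    -- the positive root of `α u² - 2 t u - β = 0`
    set r := √(t ^ 2 + α * β)
    have hr : r ^ 2 = t ^ 2 + α * β := Real.sq_sqrt (by positivity)
    have hr0 : 0 < r := by positivity
    set u := (t + r) / α
    have hu : 0 < u := by positivity
    have hcu : coneCoeff α β u = t := by
      unfold coneCoeff u
      field_simp
      linear_combination hr
    refine ⟨u, ?_, hcu⟩
    rw [mem_Ici, ← (coneCoeff_strictMonoOn hα hβ.le).le_iff_le hpos hu, hzero, hcu]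
    exact ht

end coneCoeff

section profile

variable {n : ℕ}

theorem gtV_sq (hn : 3 ≤ n) : gtV n ^ 2 = ((n : ℝ) - 3) / ((n : ℝ) - 1) := by
  have : (3 : ℝ) ≤ n := by exact_mod_cast hn
  exact Real.sq_sqrt (div_nonneg (by linarith) (by linarith))

theorem gtV_pos (hn : 4 ≤ n) : 0 < gtV n := by
  have : (4 : ℝ) ≤ n := by exact_mod_cast hn
  exact Real.sqrt_pos.2 (div_pos (by linarith) (by linarith))

theorem gtV_le_one (hn : 2 ≤ n) : gtV n ≤ 1 := by
  have : (2 : ℝ) ≤ n := by exact_mod_cast hn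
  exact Real.sqrt_le_one.2 ((div_le_one (by linarith)).2 (by linarith))

theorem gtF_gtV (hn : 3 ≤ n) : gtF n (gtV n) = gtAmax n := by
  have : (3 : ℝ) ≤ n := by exact_mod_cast hn
  have hn1 : (n : ℝ) - 1 ≠ 0 := by linarith
  rw [gtF, gtAmax, gtV_sq hn]
  congr 1
  field_simp
  ring

theorem hasDerivAt_gtF (hn : 4 ≤ n) (u : ℝ) :
    HasDerivAt (gtF n) (u ^ (n - 4) * (((n : ℝ) - 3) - ((n : ℝ) - 1) * u ^ 2)) u := by
  obtain ⟨k, rfl⟩ : ∃ k, n = k + 4 := ⟨n - 4, by omega⟩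
  have h : HasDerivAt (fun x : ℝ => (1 - x ^ 2) * x ^ (k + 1)) _ u :=
    ((hasDerivAt_pow 2 u).const_sub 1).mul (hasDerivAt_pow (k + 1) u)
  refine h.congr_deriv ?_
  push_cast
  ring

theorem gtF_strictAntiOn (hn : 4 ≤ n) : StrictAntiOn (gtF n) (Ici (gtV n)) := by
  have hcont : Continuous (gtF n) :=
    continuous_iff_continuousAt.2 fun u => (hasDerivAt_gtF hn u).continuousAt
  refine strictAntiOn_of_deriv_neg (convex_Ici _) hcont.continuousOn fun u hu => ?_
  rw [interior_Ici, mem_Ioi] at hu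
  have hv := gtV_pos hn
  have hn1 : (0 : ℝ) < n - 1 := by
    have : (4 : ℝ) ≤ n := by exact_mod_cast hn
    linarith
  have hu2 : ((n : ℝ) - 3) / ((n : ℝ) - 1) < u ^ 2 := by
    rw [← gtV_sq (by omega)]
    exact pow_lt_pow_left₀ hu hv.le two_ne_zero
  rw [div_lt_iff₀ hn1] at hu2
  rw [(hasDerivAt_gtF hn u).deriv]
  exact mul_neg_of_pos_of_neg (pow_pos (hv.trans hu) _) (by linarith)

theorem gtF_mapsTo (hn : 4 ≤ n) : MapsTo (gtF n) (Ici (gtV n)) (Iic (gtAmax n)) :=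
  fun u hu => gtF_gtV (n := n) (by omega) ▸
    (gtF_strictAntiOn hn).antitoneOn self_mem_Ici hu hu

end profile

/-- For `n ≥ 4`, if `U` sends each `a ≤ a_max` to the unique `u_a ∈ [v, ∞)` with
`f(u_a) = a`, then the cone-angle coefficient
`c_a = ((n-1) u_a - (n-3)/u_a)/2` is a strictly decreasing bijection from
`(-∞, a_max]` onto `[0, ∞)`, and `c_0 = 1`. -/
theorem cone_angle_coefficient_bijection (n : ℕ) (hn : 4 ≤ n) (U : ℝ → ℝ)
    (hU : ∀ a : ℝ, a ≤ gtAmax n → U a ∈ Set.Ici (gtV n) ∧ gtF n (U a) = a) :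
    StrictAntiOn (fun a : ℝ => (((n : ℝ) - 1) * U a - ((n : ℝ) - 3) / U a) / 2)
        (Set.Iic (gtAmax n)) ∧
    Set.BijOn (fun a : ℝ => (((n : ℝ) - 1) * U a - ((n : ℝ) - 3) / U a) / 2)
        (Set.Iic (gtAmax n)) (Set.Ici (0 : ℝ)) ∧
    (((n : ℝ) - 1) * U 0 - ((n : ℝ) - 3) / U 0) / 2 = 1 := by
  have hn' : (4 : ℝ) ≤ n := by exact_mod_cast hn
  have hUmaps : MapsTo U (Iic (gtAmax n)) (Ici (gtV n)) := fun a ha => (hU a ha).1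
  have hfU : LeftInvOn (gtF n) U (Iic (gtAmax n)) := fun a ha => (hU a ha).2
  have hUf : RightInvOn (gtF n) U (Ici (gtV n)) :=
    (gtF_strictAntiOn hn).injOn.rightInvOn_of_leftInvOn hfU (gtF_mapsTo hn) hUmaps
  have hUanti : StrictAntiOn U (Iic (gtAmax n)) := hfU.strictAntiOn (gtF_strictAntiOn hn) hUmaps
  have hc : BijOn (coneCoeff ((n : ℝ) - 1) ((n : ℝ) - 3)) (Ici (gtV n)) (Ici 0) :=
    coneCoeff_bijOn (by linarith) (by linarith)
  have hcmono : StrictMonoOn (coneCoeff ((n : ℝ) - 1) ((n : ℝ) - 3)) (Ici (gtV n)) :=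
    (coneCoeff_strictMonoOn (by linarith) (by linarith)).mono (Ici_subset_Ioi.2 (gtV_pos hn))
  have hU0 : U 0 = 1 := by
    simpa [gtF] using hUf (mem_Ici.2 (gtV_le_one (by omega)))
  refine ⟨hcmono.comp_strictAntiOn hUanti hUmaps, hc.comp (InvOn.bijOn ⟨hfU, hUf⟩ hUmaps
    (gtF_mapsTo hn)), ?_⟩
  rw [hU0]
  ring
end

section
/- Let n ≥ 2 be a natural number, K > 0 and B real numbers, λ : Fin n → ℝ, and M : Fin n → Fin n → ℝ a symmetric array (M i j = M j i) such that M i j ≤ −K whenever i ≠ j, and such that for every index i the row sum ∑_{j ≠ i} M i j is at least −B. Then ∑_i ∑_{j ≠ i} M i j · λ i · λ j ≤ (B − (n−2)·K) · ∑_i (λ i)². -/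
/-!
Write `M = -K + (M + K)`. The constant part contributes
`-K ∑_{i ≠ j} λ_i λ_j = -K ((∑ λ_i)² - ∑ λ_i²) ≤ K ∑ λ_i²`. The array `M + K` is symmetric with
nonpositive off-diagonal entries, so `(λ_i + λ_j)² ≥ 0` bounds its quadratic form by
`-∑_i r_i λ_i²`, where `r_i ≥ -B + (n - 1) K` is its `i`-th row sum.
-/

open Finset

namespace Finset

variable {ι : Type*} [Fintype ι] [DecidableEq ι]

theorem sum_sum_erase_comm {β : Type*} [AddCommMonoid β] (f : ι → ι → β) :
    ∑ i, ∑ j ∈ univ.erase i, f i j = ∑ i, ∑ j ∈ univ.erase i, f j i := by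
  rw [sum_comm' (t' := univ) (s' := fun j => univ.erase j)]
  intro i j
  simp [ne_comm]

theorem sum_sum_erase_mul_eq {R : Type*} [CommRing R] (x : ι → R) :
    ∑ i, ∑ j ∈ univ.erase i, x i * x j = (∑ i, x i) ^ 2 - ∑ i, x i ^ 2 := by
  simp only [← mul_sum, sum_erase_eq_sub (mem_univ _), sum_sub_distrib, ← sum_mul, sq]

variable {R : Type*} [Field R] [LinearOrder R] [IsStrictOrderedRing R]

theorem sum_sum_erase_mul_le_of_nonpos (a : ι → ι → R) (x : ι → R)
    (hsymm : ∀ i j, a i j = a j i) (hnonpos : ∀ i j, i ≠ j → a i j ≤ 0) :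
    ∑ i, ∑ j ∈ univ.erase i, a i j * x i * x j ≤
      -∑ i, (∑ j ∈ univ.erase i, a i j) * x i ^ 2 := by
  have hswap : ∑ i, ∑ j ∈ univ.erase i, a i j * x j ^ 2 =
      ∑ i, (∑ j ∈ univ.erase i, a i j) * x i ^ 2 := by
    rw [sum_sum_erase_comm]
    simp only [sum_mul, hsymm]
  have hterm : ∀ i, ∀ j ∈ univ.erase i,
      a i j * x i * x j ≤ -(a i j * x i ^ 2 + a i j * x j ^ 2) / 2 := by
    intro i j hj
    nlinarith [hnonpos i j (ne_of_mem_erase hj).symm, sq_nonneg (x i + x j)]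
  calc ∑ i, ∑ j ∈ univ.erase i, a i j * x i * x j
      ≤ ∑ i, ∑ j ∈ univ.erase i, -(a i j * x i ^ 2 + a i j * x j ^ 2) / 2 :=
        sum_le_sum fun i _ => sum_le_sum (hterm i)
    _ = -(∑ i, (∑ j ∈ univ.erase i, a i j) * x i ^ 2 +
          ∑ i, ∑ j ∈ univ.erase i, a i j * x j ^ 2) / 2 := by
        simp only [sum_div, neg_div, sum_neg_distrib, sum_add_distrib, add_div, sum_mul]
    _ = -∑ i, (∑ j ∈ univ.erase i, a i j) * x i ^ 2 := by rw [hswap]; ring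

theorem sum_sum_erase_mul_le_of_offDiag_le_neg (K B : R) (hK : 0 ≤ K) (M : ι → ι → R) (x : ι → R)
    (hsymm : ∀ i j, M i j = M j i) (hoff : ∀ i j, i ≠ j → M i j ≤ -K)
    (hrow : ∀ i, -B ≤ ∑ j ∈ univ.erase i, M i j) :
    ∑ i, ∑ j ∈ univ.erase i, M i j * x i * x j ≤
      (B - ((Fintype.card ι : R) - 2) * K) * ∑ i, x i ^ 2 := by
  set a : ι → ι → R := fun i j => M i j + K
  have hsplit : ∑ i, ∑ j ∈ univ.erase i, M i j * x i * x j =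
      ∑ i, ∑ j ∈ univ.erase i, a i j * x i * x j -
        K * ∑ i, ∑ j ∈ univ.erase i, x i * x j := by
    simp only [a, add_mul, sum_add_distrib, mul_sum, mul_assoc]
    ring
  have hrow_a : ∀ i, -B + ((Fintype.card ι : R) - 1) * K ≤ ∑ j ∈ univ.erase i, a i j := by
    intro i
    have hcard : 1 ≤ Fintype.card ι := Fintype.card_pos_iff.mpr ⟨i⟩
    simp only [a, sum_add_distrib, sum_const, card_erase_of_mem (mem_univ i), card_univ,
      nsmul_eq_mul, Nat.cast_sub hcard, Nat.cast_one]
    linarith [hrow i]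
  have ha := sum_sum_erase_mul_le_of_nonpos a x (fun i j => by simp only [a, hsymm i j])
    (fun i j hij => by simp only [a]; linarith [hoff i j hij])
  have hweight : -∑ i, (∑ j ∈ univ.erase i, a i j) * x i ^ 2 ≤
      (B - ((Fintype.card ι : R) - 1) * K) * ∑ i, x i ^ 2 := by
    rw [mul_sum, ← sum_neg_distrib]
    refine sum_le_sum fun i _ => ?_
    nlinarith [hrow_a i, sq_nonneg (x i)]
  rw [hsplit, sum_sum_erase_mul_eq]
  linarith [mul_nonneg hK (sq_nonneg (∑ i, x i))]

end Finset

theorem koiso_curvature_term_bound_general (n : ℕ) (K B : ℝ) (hK : 0 < K)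
    (lam : Fin n → ℝ) (M : Fin n → Fin n → ℝ)
    (hsym : ∀ i j, M i j = M j i)
    (hoff : ∀ i j, i ≠ j → M i j ≤ -K)
    (hrow : ∀ i, -B ≤ ∑ j ∈ Finset.univ.erase i, M i j) :
    ∑ i, ∑ j ∈ Finset.univ.erase i, M i j * lam i * lam j ≤
      (B - ((n : ℝ) - 2) * K) * ∑ i, lam i ^ 2 := by
  simpa only [Fintype.card_fin] using sum_sum_erase_mul_le_of_offDiag_le_neg K B hK.le M lam hsym hoff hrow

/-- Pointwise algebraic core of Koiso's coercivity estimate: if the symmetric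
array `M` has off-diagonal entries `≤ -K < 0` and row sums (over `j ≠ i`)
bounded below by `-B`, then `∑_{i ≠ j} M i j · λ i · λ j ≤ (B - (n-2)K) ∑ λ i²`. -/
theorem koiso_curvature_term_bound (n : ℕ) (hn : 2 ≤ n) (K B : ℝ) (hK : 0 < K)
    (lam : Fin n → ℝ) (M : Fin n → Fin n → ℝ)
    (hsym : ∀ i j, M i j = M j i)
    (hoff : ∀ i j, i ≠ j → M i j ≤ -K)
    (hrow : ∀ i, -B ≤ ∑ j ∈ Finset.univ.erase i, M i j) :
    ∑ i, ∑ j ∈ Finset.univ.erase i, M i j * lam i * lam j ≤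
      (B - ((n : ℝ) - 2) * K) * ∑ i, lam i ^ 2 :=
  koiso_curvature_term_bound_general n K B hK lam M hsym hoff hrow
end

section
/- Let Γ be a group acting by isometries on a proper metric space X, with the action properly discontinuous and cocompact. For every d ≥ 0, the set Ĥ_d = { γ ∈ Γ : γ ≠ 1 and there exists x ∈ X with dist(γ·x, x) ≤ d } is contained in finitely many conjugacy classes of Γ; that is, the image of Ĥ_d in the set of conjugacy classes of Γ is finite. -/
/-- If a group `Γ` acts by isometries on a proper metric space `X`, properly
discontinuously and cocompactly, then for every `d ≥ 0` the set of nontrivial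
elements of `Γ` displacing some point by at most `d` meets only finitely many
conjugacy classes. -/
theorem finitely_many_small_displacement_conjugacy_classes
    {Γ X : Type*} [Group Γ] [MetricSpace X] [ProperSpace X] [MulAction Γ X]
    (hiso : ∀ γ : Γ, Isometry (fun x : X => γ • x))
    (hpd : ∀ K L : Set X, IsCompact K → IsCompact L →
      {γ : Γ | ((fun x : X => γ • x) '' K ∩ L).Nonempty}.Finite)
    (hcc : ∃ K : Set X, IsCompact K ∧ ∀ x : X, ∃ γ : Γ, γ • x ∈ K)
    (d : ℝ) (hd : 0 ≤ d) :
    (ConjClasses.mk '' {γ : Γ | γ ≠ 1 ∧ ∃ x : X, dist (γ • x) x ≤ d}).Finite := by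
  obtain ⟨K, hK, hKorb⟩ := hcc
  have hL : IsCompact (Metric.cthickening d K) := hK.cthickening
  have hfin := (hpd K (Metric.cthickening d K) hK hL).image ConjClasses.mk
  refine hfin.subset ?_
  rintro c ⟨γ, ⟨hγ1, x, hx⟩, rfl⟩
  obtain ⟨g, hg⟩ := hKorb x
  refine ⟨g * γ * g⁻¹, ?_, ?_⟩
  · refine ⟨(g * γ * g⁻¹) • (g • x), ⟨g • x, hg, rfl⟩, ?_⟩
    have he : (g * γ * g⁻¹) • (g • x) = g • (γ • x) := by
      simp [mul_smul]
    rw [he]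
    have hdist : dist (g • (γ • x)) (g • x) ≤ d := by
      rw [(hiso g).dist_eq]; exact hx
    exact Metric.mem_cthickening_of_dist_le _ (g • x) d K hg hdist
  · exact (ConjClasses.mk_eq_mk_iff_isConj.mpr (isConj_iff.mpr ⟨g, rfl⟩)).symm
end

section
/- Let Γ be a group acting by isometries on a proper metric space X, with the action properly discontinuous and cocompact. Let (Γ_k) be a sequence of normal subgroups of Γ such that for every γ ∈ Γ with γ ≠ 1 there exists K ∈ ℕ with γ ∉ Γ_k for all k ≥ K. Then for every d ≥ 0 there exists K ∈ ℕ such that for all k ≥ K, every γ ∈ Γ_k with γ ≠ 1 satisfies dist(γ·x, x) > d for all x ∈ X. -/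
/-- If a group `Γ` acts by isometries on a proper metric space `X`, properly
discontinuously and cocompactly, and `(Γ_k)` is a sequence of normal subgroups
eventually avoiding each nontrivial element of `Γ`, then for every `d ≥ 0`,
eventually every nontrivial element of `Γ_k` displaces every point by more
than `d`. -/
theorem eventually_large_minimal_displacement
    {Γ X : Type*} [Group Γ] [MetricSpace X] [ProperSpace X] [MulAction Γ X]
    (hiso : ∀ γ : Γ, Isometry (fun x : X => γ • x))
    (hpd : ∀ K L : Set X, IsCompact K → IsCompact L →
      {γ : Γ | ((fun x : X => γ • x) '' K ∩ L).Nonempty}.Finite)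
    (hcc : ∃ K : Set X, IsCompact K ∧ ∀ x : X, ∃ γ : Γ, γ • x ∈ K)
    (Γk : ℕ → Subgroup Γ) (hnormal : ∀ k, (Γk k).Normal)
    (havoid : ∀ γ : Γ, γ ≠ 1 → ∃ K : ℕ, ∀ k, K ≤ k → γ ∉ Γk k)
    (d : ℝ) (hd : 0 ≤ d) :
    ∃ K : ℕ, ∀ k, K ≤ k → ∀ γ ∈ Γk k, γ ≠ 1 → ∀ x : X, d < dist (γ • x) x := by
  obtain ⟨C, hC, hcov⟩ := hcc
  set L : Set X := Metric.cthickening d C with hL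
  have hLc : IsCompact L := hC.cthickening
  have hF : {γ : Γ | ((fun x : X => γ • x) '' L ∩ L).Nonempty}.Finite := hpd L L hLc hLc
  classical
  set N : ℕ := hF.toFinset.sup fun γ =>
    if h : γ = 1 then 0 else (havoid γ h).choose with hN
  refine ⟨N, fun k hk γ hγk hγ1 x => ?_⟩
  by_contra hle
  push_neg at hle
  obtain ⟨g, hg⟩ := hcov x
  set γ' : Γ := g * γ * g⁻¹ with hγ'
  have hγ'1 : γ' ≠ 1 := by
    intro h
    apply hγ1
    have : g * γ * g⁻¹ = g * 1 * g⁻¹ := by rw [← hγ'] at *; simpa using h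
    exact mul_left_cancel (mul_right_cancel this)
  have hγ'k : γ' ∈ Γk k := (hnormal k).conj_mem γ hγk g
  have hsmul : γ' • (g • x) = g • (γ • x) := by
    simp [hγ', mul_smul]
  have hdist : dist (γ' • (g • x)) (g • x) ≤ d := by
    rw [hsmul]
    have := (hiso g).dist_eq (γ • x) x
    rw [this]; exact hle
  have hmemL : g • x ∈ L := Metric.self_subset_cthickening C hg
  have hmemL' : γ' • (g • x) ∈ L :=
    Metric.mem_cthickening_of_dist_le _ _ d C hg hdist
  have hγ'F : γ' ∈ hF.toFinset := by
    rw [Set.Finite.mem_toFinset]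
    exact ⟨γ' • (g • x), ⟨g • x, hmemL, rfl⟩, hmemL'⟩
  have hle' : (if h : γ' = 1 then 0 else (havoid γ' h).choose) ≤ N :=
    by rw [hN]; exact Finset.le_sup (f := fun γ => if h : γ = 1 then 0 else (havoid γ h).choose) hγ'F
  rw [dif_neg hγ'1] at hle'
  exact (havoid γ' hγ'1).choose_spec k (le_trans hle' hk) hγ'k
end

section
/- Let X and Y be Banach spaces, x₀ ∈ X, δ > 0, and let Φ be a continuously differentiable map from an open set containing the closed ball B̄(x₀, δ) to Y. Assume: (i) the derivative DΦ is Lipschitz on B̄(x₀, δ); (ii) for every x ∈ B̄(x₀, δ), DΦ(x) is a continuous linear isomorphism from X to Y; (iii) there is M with ‖DΦ(x)⁻¹‖ ≤ M for all x ∈ B̄(x₀, δ); and (iv) ‖DΦ(x)⁻¹(Φ(x₀))‖ ≤ δ for every x ∈ B̄(x₀, δ). Then there exists x* ∈ B̄(x₀, δ) with Φ(x*) = 0. -/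
/-!
Follow the path `γ(t) = (1 - t) Φ(x₀)` backwards through `Φ`: a curve `g` with `g 0 = x₀` and
`g' = -DΦ(g)⁻¹ Φ(x₀)` satisfies `Φ (g t) = (1 - t) Φ(x₀)`, so `g 1` is a zero of `Φ`. The
bounds on `DΦ` make this vector field Lipschitz on `B̄(x₀, δ)`, and `‖DΦ(x)⁻¹ Φ(x₀)‖ ≤ δ` keeps
the Picard–Lindelöf solution inside the ball up to time `1`.
-/

open Metric Set

theorem lipschitzOnWith_symm_apply {𝕜 E F : Type*} [NontriviallyNormedField 𝕜]
    [NormedAddCommGroup E] [NormedSpace 𝕜 E] [NormedAddCommGroup F] [NormedSpace 𝕜 F]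
    {s : Set E} {A : E → E ≃L[𝕜] F} {L M C : ℝ} {v : F}
    (hA : ∀ x ∈ s, ∀ y ∈ s, ‖(A x : E →L[𝕜] F) - (A y : E →L[𝕜] F)‖ ≤ L * ‖x - y‖)
    (hM : ∀ x ∈ s, ‖((A x).symm : F →L[𝕜] E)‖ ≤ M)
    (hC : ∀ x ∈ s, ‖(A x).symm v‖ ≤ C) :
    LipschitzOnWith (M * L * C).toNNReal (fun x ↦ (A x).symm v) s := by
  refine LipschitzOnWith.of_dist_le' fun x hx y hy ↦ ?_
  set u := (A y).symm v
  have key : (A x).symm v - u = ((A x).symm : F →L[𝕜] E)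
      (((A y : E →L[𝕜] F) - (A x : E →L[𝕜] F)) u) := by
    simp [u]
  have hAyx : ‖(A y : E →L[𝕜] F) - (A x : E →L[𝕜] F)‖ ≤ L * ‖x - y‖ := by
    simpa only [norm_sub_rev y x] using hA y hy x hx
  have hM₀ : 0 ≤ M := (norm_nonneg _).trans (hM x hx)
  rw [dist_eq_norm, dist_eq_norm, key]
  calc _ ≤ M * ‖((A y : E →L[𝕜] F) - (A x : E →L[𝕜] F)) u‖ :=
        ContinuousLinearMap.le_of_opNorm_le _ (hM x hx) _
    _ ≤ M * (‖(A y : E →L[𝕜] F) - (A x : E →L[𝕜] F)‖ * ‖u‖) := by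
        gcongr; exact ContinuousLinearMap.le_opNorm _ _
    _ ≤ M * (L * ‖x - y‖ * C) := by
        gcongr
        · exact (norm_nonneg _).trans hAyx
        · exact hC y hy
    _ = M * L * C * ‖x - y‖ := by ring

theorem Convex.apply_eq_add_sub_smul_of_hasDerivWithinAt {E : Type*} [NormedAddCommGroup E]
    [NormedSpace ℝ E] {f : ℝ → E} {w : E} {s : Set ℝ} {x y : ℝ} (hs : Convex ℝ s)
    (hf : ∀ t ∈ s, HasDerivWithinAt f w s t) (hx : x ∈ s) (hy : y ∈ s) :
    f y = f x + (y - x) • w := by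
  have hderiv : ∀ t ∈ s, HasDerivWithinAt (fun t ↦ f t - t • w) 0 s t := fun t ht ↦ by
    have := (hf t ht).sub ((hasDerivWithinAt_id t s).smul_const w)
    rwa [one_smul, sub_self] at this
  have := hs.norm_image_sub_le_of_norm_hasDerivWithin_le (C := 0) hderiv (fun _ _ ↦ by simp) hx hy
  rw [zero_mul, norm_le_zero_iff] at this
  rw [sub_smul, ← sub_eq_zero, ← this]
  abel

namespace IsPicardLindelof

variable {E : Type*} [NormedAddCommGroup E] [NormedSpace ℝ E] [CompleteSpace E]
  {f : ℝ → E → E} {tmin tmax : ℝ} {t₀ : Icc tmin tmax} {x₀ x : E} {a r L K : NNReal}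

theorem exists_eq_forall_mem_closedBall_forall_mem_Icc_hasDerivWithinAt
    (hf : IsPicardLindelof f t₀ x₀ a r L K) (hx : x ∈ closedBall x₀ r) :
    ∃ α : ℝ → E, α t₀ = x ∧ (∀ t, α t ∈ closedBall x₀ a) ∧
      ∀ t ∈ Icc tmin tmax, HasDerivWithinAt α (f t (α t)) (Icc tmin tmax) t := by
  obtain ⟨α, hα⟩ := ODE.FunSpace.exists_isFixedPt_next hf hx
  refine ⟨α.compProj, by rw [ODE.FunSpace.compProj_val, ← hα, ODE.FunSpace.next_apply₀],
    fun _ ↦ α.compProj_mem_closedBall hf.mul_max_le, fun t ht ↦ ?_⟩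
  apply ODE.hasDerivWithinAt_picard_Icc t₀.2 hf.continuousOn_uncurry
    α.continuous_compProj.continuousOn (fun _ _ ↦ α.compProj_mem_closedBall hf.mul_max_le)
    x ht |>.congr_of_mem _ ht
  intro t' ht'
  nth_rw 1 [← hα]
  rw [ODE.FunSpace.compProj_of_mem ht', ODE.FunSpace.next_apply]

end IsPicardLindelof

theorem exists_eq_forall_mem_closedBall_forall_mem_Icc_zero_one_hasDerivWithinAt
    {E : Type*} [NormedAddCommGroup E] [NormedSpace ℝ E] [CompleteSpace E]
    {F : E → E} {x₀ : E} {r : ℝ} {K : NNReal} (hr : 0 ≤ r)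
    (hF : LipschitzOnWith K F (closedBall x₀ r)) (hFr : ∀ x ∈ closedBall x₀ r, ‖F x‖ ≤ r) :
    ∃ g : ℝ → E, g 0 = x₀ ∧ (∀ t, g t ∈ closedBall x₀ r) ∧
      ∀ t ∈ Icc (0 : ℝ) 1, HasDerivWithinAt g (F (g t)) (Icc 0 1) t := by
  lift r to NNReal using hr
  have hPL : IsPicardLindelof (fun _ ↦ F) (⟨0, by simp⟩ : Icc (0 : ℝ) 1) x₀ r 0 r K :=
    .of_time_independent hFr hF (by simp)
  exact hPL.exists_eq_forall_mem_closedBall_forall_mem_Icc_hasDerivWithinAt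
    (mem_closedBall_self le_rfl)

theorem continuation_method_zero_general
    {X Y : Type*} [NormedAddCommGroup X] [NormedSpace ℝ X] [CompleteSpace X]
    [NormedAddCommGroup Y] [NormedSpace ℝ Y]
    (x₀ : X) (δ : ℝ) (hδ : 0 < δ) (Φ : X → Y) (Φ' : X → X ≃L[ℝ] Y)
    (hderiv : ∀ x ∈ Metric.closedBall x₀ δ, HasFDerivAt Φ (Φ' x : X →L[ℝ] Y) x)
    (L : ℝ)
    (hlip : ∀ x ∈ Metric.closedBall x₀ δ, ∀ y ∈ Metric.closedBall x₀ δ,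
      ‖(Φ' x : X →L[ℝ] Y) - (Φ' y : X →L[ℝ] Y)‖ ≤ L * ‖x - y‖)
    (M : ℝ)
    (hM : ∀ x ∈ Metric.closedBall x₀ δ, ‖((Φ' x).symm : Y →L[ℝ] X)‖ ≤ M)
    (hsmall : ∀ x ∈ Metric.closedBall x₀ δ, ‖(Φ' x).symm (Φ x₀)‖ ≤ δ) :
    ∃ x ∈ Metric.closedBall x₀ δ, Φ x = 0 := by
  have hsmall' : ∀ x ∈ closedBall x₀ δ, ‖(Φ' x).symm (-Φ x₀)‖ ≤ δ := by
    simpa only [map_neg, norm_neg] using hsmall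
  obtain ⟨g, hg₀, hg_mem, hg⟩ :=
    exists_eq_forall_mem_closedBall_forall_mem_Icc_zero_one_hasDerivWithinAt hδ.le
      (lipschitzOnWith_symm_apply hlip hM hsmall') hsmall'
  have hΦg : ∀ t ∈ Icc (0 : ℝ) 1, HasDerivWithinAt (Φ ∘ g) (-Φ x₀) (Icc 0 1) t := fun t ht ↦ by
    simpa using (hderiv _ (hg_mem t)).comp_hasDerivWithinAt t (hg t ht)
  refine ⟨g 1, hg_mem 1, ?_⟩
  have := (convex_Icc (0 : ℝ) 1).apply_eq_add_sub_smul_of_hasDerivWithinAt hΦg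
    (left_mem_Icc.2 zero_le_one) (right_mem_Icc.2 zero_le_one)
  simpa [hg₀] using this

/-- Continuation-method existence principle: let `Φ` be continuously
differentiable near the closed ball `B̄(x₀, δ)` with derivative `Φ' x` a linear
isomorphism at each point, Lipschitz in `x`, with uniformly bounded inverse, and
suppose `‖Φ'(x)⁻¹ Φ(x₀)‖ ≤ δ` on the ball.  Then `Φ` has a zero in the ball. -/
theorem continuation_method_zero
    {X Y : Type*} [NormedAddCommGroup X] [NormedSpace ℝ X] [CompleteSpace X]
    [NormedAddCommGroup Y] [NormedSpace ℝ Y] [CompleteSpace Y]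
    (x₀ : X) (δ : ℝ) (hδ : 0 < δ) (Φ : X → Y) (Φ' : X → X ≃L[ℝ] Y)
    (hderiv : ∀ x ∈ Metric.closedBall x₀ δ, HasFDerivAt Φ (Φ' x : X →L[ℝ] Y) x)
    (L : ℝ)
    (hlip : ∀ x ∈ Metric.closedBall x₀ δ, ∀ y ∈ Metric.closedBall x₀ δ,
      ‖(Φ' x : X →L[ℝ] Y) - (Φ' y : X →L[ℝ] Y)‖ ≤ L * ‖x - y‖)
    (M : ℝ)
    (hM : ∀ x ∈ Metric.closedBall x₀ δ, ‖((Φ' x).symm : Y →L[ℝ] X)‖ ≤ M)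
    (hsmall : ∀ x ∈ Metric.closedBall x₀ δ, ‖(Φ' x).symm (Φ x₀)‖ ≤ δ) :
    ∃ x ∈ Metric.closedBall x₀ δ, Φ x = 0 :=
  continuation_method_zero_general x₀ δ hδ Φ Φ' hderiv L hlip M hM hsmall
end
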